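/- arXiv:1110.2564 — 3 statements merged into one kernel-verified Lean document; each statement's English description precedes it below -/
import Mathlib

section
/- Suppose P is a 231-avoiding full rook placement on a Ferrers board F, and V1, V2 are vertices of F such that V1 is directly below V2. Suppose P has a marker X in the top row of R(V2) and another marker Y in R(V2) that is to the right of X. Then S(P,V1) = S(P,V2). -/
/-!
Common definitions: Ferrers boards, rook placements, pattern avoidance,
following Bloom–Saracino, "A Simple Bijection Between 231-Avoiding and
312-Avoiding Placements".

A square of the `n × n` array `𝒜` is recorded by the pair
`(column index, row index)` (0-based), i.e. the square `(c, r)` is the unit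
square with SW corner `(c, r)` and NE corner `(c+1, r+1)`.
-/

/-- A square of the grid, given by its (column index, row index), both 0-based. -/
abbrev Square : Type := ℕ × ℕ

/-- For a vertex `V = (a, b)`, `RV V` is the set of squares of the rectangle `R(V)`
bounded by the lines `x = 0`, `x = a`, `y = 0`, `y = b`: all squares with column
index `< a` and row index `< b`. -/
def RV (V : ℕ × ℕ) : Finset Square := Finset.range V.1 ×ˢ Finset.range V.2

/-- A Ferrers board contained in the `n × n` array `𝒜`: a set of squares such that
`R(V) ⊆ F` for every vertex `V` of `F`, i.e. a downward- and leftward-closed set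
of squares. -/
structure FerrersBoard (n : ℕ) where
  squares : Finset Square
  inArray : ∀ s ∈ squares, s.1 < n ∧ s.2 < n
  closed : ∀ s ∈ squares, ∀ t : Square, t.1 ≤ s.1 → t.2 ≤ s.2 → t ∈ squares

namespace FerrersBoard

variable {n : ℕ}

/-- The number of squares in column `c` of `F`. -/
def colHeight (F : FerrersBoard n) (c : ℕ) : ℕ :=
  (F.squares.filter fun s => s.1 = c).card

/-- The number of squares in row `r` of `F`. -/
def rowWidth (F : FerrersBoard n) (r : ℕ) : ℕ :=
  (F.squares.filter fun s => s.2 = r).card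

/-- The length of the longest row of `F` (the bottom row, by closedness),
i.e. the number of nonempty columns of `F`. -/
def width (F : FerrersBoard n) : ℕ := F.rowWidth 0

/-- The length of the longest column of `F` (the leftmost column, by closedness),
i.e. the number of nonempty rows of `F`. -/
def height (F : FerrersBoard n) : ℕ := F.colHeight 0

/-- `V` is a vertex of `F`, i.e. a corner of one of the squares of `F`. -/
def IsVertex (F : FerrersBoard n) (V : ℕ × ℕ) : Prop :=
  ∃ s ∈ F.squares, (V.1 = s.1 ∨ V.1 = s.1 + 1) ∧ (V.2 = s.2 ∨ V.2 = s.2 + 1)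

/-- `V = (a, b)` lies on the right/up border of `F` (the border of `F` excluding
its vertical left-hand side and horizontal bottom): this border is the staircase
lattice path from the top-left corner `(0, height F)` down to `(width F, 0)`, and
its vertices are exactly those `(a, b)` with `a ≤ width F` and
`colHeight a ≤ b ≤ colHeight (a - 1)` (where for `a = 0` truncated subtraction
makes the condition read `b = height F`). -/
def IsBorderVertex (F : FerrersBoard n) (V : ℕ × ℕ) : Prop :=
  V.1 ≤ F.width ∧ F.colHeight V.1 ≤ V.2 ∧ V.2 ≤ F.colHeight (V.1 - 1)

/-- `V1, V2` are `F`-diagonal vertices: both lie on the right/up border of `F`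
and they are the left and right ends of a diagonal of slope `-1` lying entirely
within `F` (the diagonal from `V1 = (a, b)` to `V2 = (a + k, b - k)` passes, for
each `0 ≤ i < k`, through the square with column `a + i` and row `b - i - 1`,
and all these squares must belong to `F`). -/
def DiagonalVertices (F : FerrersBoard n) (V1 V2 : ℕ × ℕ) : Prop :=
  F.IsBorderVertex V1 ∧ F.IsBorderVertex V2 ∧
    ∃ k : ℕ, V2.1 = V1.1 + k ∧ V1.2 = V2.2 + k ∧
      ∀ i < k, (V1.1 + i, V2.2 + (k - 1 - i)) ∈ F.squares

end FerrersBoard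

/-- `V1` is directly to the left of `V2`. -/
def LeftOf (V1 V2 : ℕ × ℕ) : Prop := V2.1 = V1.1 + 1 ∧ V2.2 = V1.2

/-- `V1` is directly below `V2`. -/
def Below (V1 V2 : ℕ × ℕ) : Prop := V2.1 = V1.1 ∧ V2.2 = V1.2 + 1

/-- `P` is a rook placement on the Ferrers board `F`: a subset of `F` containing
at most one square (marker) from each column and at most one from each row. -/
def IsRookPlacement {n : ℕ} (F : FerrersBoard n) (P : Finset Square) : Prop :=
  P ⊆ F.squares ∧ (∀ x ∈ P, ∀ y ∈ P, x.1 = y.1 → x = y) ∧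
    (∀ x ∈ P, ∀ y ∈ P, x.2 = y.2 → x = y)

/-- `P` is a full rook placement on `F`: a rook placement with exactly one marker
in each (nonempty) column and each (nonempty) row of `F`. -/
def IsFullPlacement {n : ℕ} (F : FerrersBoard n) (P : Finset Square) : Prop :=
  IsRookPlacement F P ∧
    ∀ s ∈ F.squares, (∃ r, (s.1, r) ∈ P) ∧ (∃ c, (c, s.2) ∈ P)

/-- The set of markers `M` contains an occurrence of the pattern `τ ∈ S₃`:
three markers, listed with strictly increasing columns, whose rows are ordered
as the values of `τ`. -/
def ContainsPattern (M : Finset Square) (τ : Equiv.Perm (Fin 3)) : Prop :=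
  ∃ m : Fin 3 → Square, (∀ i, m i ∈ M) ∧
    (∀ i j : Fin 3, i < j → (m i).1 < (m j).1) ∧
    (∀ i j : Fin 3, (m i).2 < (m j).2 ↔ τ i < τ j)

/-- The rook placement `P` on `F` avoids `τ`: for every vertex `V` on the
right/up border of `F`, the restriction of `P` to `R(V)` (equivalently, the
permutation order-isomorphic to it) avoids `τ`. -/
def AvoidsOn {n : ℕ} (F : FerrersBoard n) (P : Finset Square)
    (τ : Equiv.Perm (Fin 3)) : Prop :=
  ∀ V : ℕ × ℕ, F.IsBorderVertex V → ¬ ContainsPattern (P ∩ RV V) τ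

/-- The pattern 231 (in one-line notation), as a permutation of `Fin 3`. -/
def perm231 : Equiv.Perm (Fin 3) := ⟨![1, 2, 0], ![2, 0, 1], by decide, by decide⟩

/-- The pattern 312 (in one-line notation), as a permutation of `Fin 3`. -/
def perm312 : Equiv.Perm (Fin 3) := ⟨![2, 0, 1], ![1, 2, 0], by decide, by decide⟩

/-- The maximal length of an increasing sequence of markers of `M`. -/
noncomputable def maxIncSeq (M : Finset Square) : ℕ :=
  sSup {k : ℕ | ∃ f : Fin k → Square, (∀ i, f i ∈ M) ∧
    ∀ i j : Fin k, i < j → (f i).1 < (f j).1 ∧ (f i).2 < (f j).2}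

/-- `S(P, V)`: the maximal length of an increasing sequence of markers of `P`
inside the rectangle `R(V)`.  The function `fun V => SPV P V`, restricted to the
vertices of the right/up border of `F`, is the sequence `S(P, F)`. -/
noncomputable def SPV (P : Finset Square) (V : ℕ × ℕ) : ℕ := maxIncSeq (P ∩ RV V)

/-- The `S ↦ S⁺` operation on `F`-sequences, relative to the function
`N = N(F, ·)` counting markers in rectangles: `S⁺(V) = 0` if `S V = 0`, and
`S⁺(V) = N V + 1 - S V` otherwise. -/
def plusSeq (N S : ℕ × ℕ → ℕ) : ℕ × ℕ → ℕ :=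
  fun V => if S V = 0 then 0 else N V + 1 - S V

/-- The 231-conditions for the pair `(F, S)`: monotonicity, the 0-conditions and
the (231-)diagonal condition. -/
def Conditions231 {n : ℕ} (F : FerrersBoard n) (S : ℕ × ℕ → ℕ) : Prop :=
  -- (i) monotonicity conditions
  (∀ V1 V2 : ℕ × ℕ, F.IsBorderVertex V1 → F.IsBorderVertex V2 →
    (LeftOf V1 V2 ∨ Below V1 V2) → S V1 ≤ S V2 ∧ S V2 ≤ S V1 + 1) ∧
  -- (ii) 0-conditions: first and last values are 0, no two consecutive 0s
  S (0, F.height) = 0 ∧ S (F.width, 0) = 0 ∧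
  (∀ V1 V2 : ℕ × ℕ, F.IsBorderVertex V1 → F.IsBorderVertex V2 →
    (LeftOf V1 V2 ∨ Below V1 V2) → ¬(S V1 = 0 ∧ S V2 = 0)) ∧
  -- (iii) diagonal condition
  (∀ V1 V2 : ℕ × ℕ, F.DiagonalVertices V1 V2 → S V1 ≤ S V2)

/-- The 312-conditions for the pair `(F, S)`: the same as the 231-conditions,
with the inequality in the diagonal condition reversed. -/
def Conditions312 {n : ℕ} (F : FerrersBoard n) (S : ℕ × ℕ → ℕ) : Prop :=
  (∀ V1 V2 : ℕ × ℕ, F.IsBorderVertex V1 → F.IsBorderVertex V2 →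
    (LeftOf V1 V2 ∨ Below V1 V2) → S V1 ≤ S V2 ∧ S V2 ≤ S V1 + 1) ∧
  S (0, F.height) = 0 ∧ S (F.width, 0) = 0 ∧
  (∀ V1 V2 : ℕ × ℕ, F.IsBorderVertex V1 → F.IsBorderVertex V2 →
    (LeftOf V1 V2 ∨ Below V1 V2) → ¬(S V1 = 0 ∧ S V2 = 0)) ∧
  (∀ V1 V2 : ℕ × ℕ, F.DiagonalVertices V1 V2 → S V2 ≤ S V1)

/-!
Let `f` be a longest increasing sequence of markers in `R(V2)`. Only the marker `X` of `P` lies in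
the top row of `R(V2)`, so if `f` avoids `X` it already lies in `R(V1)`. Otherwise `X` is the last
term of `f`, and replacing it by `Y` keeps the sequence increasing: a term `Z` of `f` before `X`
with `Z` higher than `Y` would make `Z, X, Y` an occurrence of 231 inside `R(V)` for the border vertex `V`
at the top-right corner of the column of `Y`. The new sequence has the same length and lies in `R(V1)`.
-/

section IncreasingSequences

def IsIncSeq {k : ℕ} (f : Fin k → Square) : Prop :=
  ∀ i j : Fin k, i < j → (f i).1 < (f j).1 ∧ (f i).2 < (f j).2

def incSeqLengths (M : Finset Square) : Set ℕ :=
  {k : ℕ | ∃ f : Fin k → Square, (∀ i, f i ∈ M) ∧ IsIncSeq f}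

variable {k : ℕ} {f : Fin k → Square}

lemma IsIncSeq.injective (hf : IsIncSeq f) : Function.Injective f := by
  intro i j hij
  by_contra hne
  rcases lt_or_gt_of_ne hne with h | h
  · exact (hf i j h).1.ne (congrArg Prod.fst hij)
  · exact (hf j i h).1.ne' (congrArg Prod.fst hij)

lemma incSeqLengths_bddAbove (M : Finset Square) : BddAbove (incSeqLengths M) := by
  refine ⟨M.card, ?_⟩
  rintro k ⟨f, hM, hf⟩
  simpa using Finset.card_le_card_of_injOn (s := Finset.univ) f (fun i _ => hM i) hf.injective.injOn

lemma exists_incSeq_maxIncSeq (M : Finset Square) :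
    ∃ f : Fin (maxIncSeq M) → Square, (∀ i, f i ∈ M) ∧ IsIncSeq f :=
  Nat.sSup_mem (s := incSeqLengths M) ⟨0, Fin.elim0, fun i => i.elim0, fun i => i.elim0⟩
    (incSeqLengths_bddAbove M)

lemma le_maxIncSeq {M : Finset Square} (hM : ∀ i, f i ∈ M) (hf : IsIncSeq f) :
    k ≤ maxIncSeq M :=
  le_csSup (incSeqLengths_bddAbove M) ⟨f, hM, hf⟩

lemma maxIncSeq_mono {M N : Finset Square} (h : M ⊆ N) : maxIncSeq M ≤ maxIncSeq N := by
  obtain ⟨g, hM, hg⟩ := exists_incSeq_maxIncSeq M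
  exact le_maxIncSeq (fun i => h (hM i)) hg

lemma IsIncSeq.update_last (hf : IsIncSeq f) {i₀ : Fin k} (hlast : ∀ j, j ≤ i₀) {Y : Square}
    (hY : ∀ j < i₀, (f j).1 < Y.1 ∧ (f j).2 < Y.2) : IsIncSeq (Function.update f i₀ Y) := by
  intro i j hij
  have hi : i ≠ i₀ := (hij.trans_le (hlast j)).ne
  rw [Function.update_of_ne hi]
  rcases eq_or_ne j i₀ with rfl | hj
  · rw [Function.update_self]
    exact hY i hij
  · rw [Function.update_of_ne hj]
    exact hf i j hij

end IncreasingSequences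

@[simp]
lemma mem_RV {V : ℕ × ℕ} {s : Square} : s ∈ RV V ↔ s.1 < V.1 ∧ s.2 < V.2 := by
  simp [RV]

lemma RV_mono {V W : ℕ × ℕ} (h1 : V.1 ≤ W.1) (h2 : V.2 ≤ W.2) : RV V ⊆ RV W :=
  Finset.product_subset_product (Finset.range_subset_range.2 h1) (Finset.range_subset_range.2 h2)

namespace FerrersBoard

variable {n : ℕ} (F : FerrersBoard n)

lemma mem_squares_iff_lt_colHeight {c r : ℕ} : (c, r) ∈ F.squares ↔ r < F.colHeight c := by
  constructor
  · intro h
    have hsub : ({c} : Finset ℕ) ×ˢ Finset.range (r + 1) ⊆ F.squares.filter (·.1 = c) := by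
      intro s hs
      simp only [Finset.mem_product, Finset.mem_singleton, Finset.mem_range] at hs
      exact Finset.mem_filter.2 ⟨F.closed _ h s hs.1.le (Nat.lt_succ_iff.1 hs.2), hs.1⟩
    simpa [colHeight] using Finset.card_le_card hsub
  · intro h
    by_contra hmem
    have hsub : F.squares.filter (·.1 = c) ⊆ ({c} : Finset ℕ) ×ˢ Finset.range r := by
      intro s hs
      rw [Finset.mem_filter] at hs
      simp only [Finset.mem_product, Finset.mem_singleton, Finset.mem_range]
      exact ⟨hs.2, lt_of_not_ge fun hr => hmem (F.closed s hs.1 (c, r) hs.2.symm.le hr)⟩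
    exact h.not_ge (by simpa [colHeight] using Finset.card_le_card hsub)

lemma lt_width {c r : ℕ} (h : (c, r) ∈ F.squares) : c < F.width := by
  have hsub : Finset.range (c + 1) ×ˢ ({0} : Finset ℕ) ⊆ F.squares.filter (·.2 = 0) := by
    intro s hs
    simp only [Finset.mem_product, Finset.mem_singleton, Finset.mem_range] at hs
    exact Finset.mem_filter.2 ⟨F.closed _ h s (Nat.lt_succ_iff.1 hs.1) (by omega), hs.2⟩
  simpa [width, rowWidth] using Finset.card_le_card hsub

lemma colHeight_succ_le (c : ℕ) : F.colHeight (c + 1) ≤ F.colHeight c :=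
  le_of_forall_lt fun r hr => (F.mem_squares_iff_lt_colHeight).1 <|
    F.closed _ ((F.mem_squares_iff_lt_colHeight).2 hr) (c, r) c.le_succ le_rfl

lemma isBorderVertex_succ_colHeight {c r : ℕ} (h : (c, r) ∈ F.squares) :
    F.IsBorderVertex (c + 1, F.colHeight c) :=
  ⟨F.lt_width h, F.colHeight_succ_le c, le_rfl⟩

lemma IsVertex.RV_subset {F : FerrersBoard n} {V : ℕ × ℕ} (hV : F.IsVertex V) :
    RV V ⊆ F.squares := by
  obtain ⟨s, hs, h1, h2⟩ := hV
  intro t ht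
  rw [mem_RV] at ht
  exact F.closed s hs t (by omega) (by omega)

end FerrersBoard

lemma containsPattern_perm231 {M : Finset Square} {Z X Y : Square}
    (hZ : Z ∈ M) (hX : X ∈ M) (hY : Y ∈ M) (hZX : Z.1 < X.1) (hXY : X.1 < Y.1)
    (hYZ : Y.2 < Z.2) (hZX' : Z.2 < X.2) : ContainsPattern M perm231 := by
  refine ⟨![Z, X, Y], fun i => ?_, fun i j hij => ?_, fun i j => ?_⟩
  · fin_cases i <;> assumption
  · fin_cases i <;> fin_cases j <;> simp at hij ⊢ <;> omega
  · fin_cases i <;> fin_cases j <;> simp [perm231] <;> omega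

lemma AvoidsOn.snd_lt_snd {n : ℕ} {F : FerrersBoard n} {P : Finset Square}
    (hP : IsRookPlacement F P) (hav : AvoidsOn F P perm231) {Z X Y : Square}
    (hZ : Z ∈ P) (hX : X ∈ P) (hY : Y ∈ P) (hZX : Z.1 < X.1) (hXY : X.1 < Y.1)
    (hZX' : Z.2 < X.2) (hsq : (Y.1, X.2) ∈ F.squares) : Z.2 < Y.2 := by
  by_contra! hYZ
  have hYZ : Y.2 < Z.2 := hYZ.lt_of_ne fun h => (hZX.trans hXY).ne' (hP.2.2 Y hY Z hZ h ▸ rfl)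
  have hXh := (F.mem_squares_iff_lt_colHeight).1 hsq
  have hR : ∀ W ∈ P, W.1 ≤ Y.1 → W.2 ≤ X.2 → W ∈ P ∩ RV (Y.1 + 1, F.colHeight Y.1) :=
    fun W hW h1 h2 => Finset.mem_inter.2 ⟨hW, mem_RV.2 ⟨Nat.lt_succ_of_le h1, h2.trans_lt hXh⟩⟩
  exact hav _ (F.isBorderVertex_succ_colHeight hsq) <|
    containsPattern_perm231 (hR Z hZ (by omega) hZX'.le) (hR X hX hXY.le le_rfl)
      (hR Y hY le_rfl (by omega)) hZX hXY hYZ hZX'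

lemma mem_inter_RV_of_below {n : ℕ} {F : FerrersBoard n} {P : Finset Square}
    (hP : IsRookPlacement F P) {V1 V2 : ℕ × ℕ} (hbelow : Below V1 V2) {X m : Square}
    (hX : X ∈ P) (hXtop : X.2 + 1 = V2.2) (hm : m ∈ P ∩ RV V2) (hmX : m ≠ X) :
    m ∈ P ∩ RV V1 := by
  simp only [Finset.mem_inter, mem_RV] at hm ⊢
  have hrow : m.2 ≠ X.2 := fun h => hmX (hP.2.2 m hm.1 X hX h)
  obtain ⟨h1, h2⟩ := hbelow
  exact ⟨hm.1, by omega, by omega⟩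

theorem SPV_eq_of_marker_in_top_row_general {n : ℕ} (F : FerrersBoard n)
    (P : Finset Square) (hP : IsFullPlacement F P) (hPavoid : AvoidsOn F P perm231)
    (V1 V2 : ℕ × ℕ) (h2 : F.IsVertex V2)
    (hbelow : Below V1 V2)
    (X Y : Square) (hX : X ∈ P ∩ RV V2) (hXtop : X.2 + 1 = V2.2)
    (hY : Y ∈ P ∩ RV V2) (hXY : X.1 < Y.1) :
    SPV P V1 = SPV P V2 := by
  refine le_antisymm (maxIncSeq_mono <| Finset.inter_subset_inter_left <|
    RV_mono hbelow.1.ge (hbelow.2 ▸ V1.2.le_succ)) ?_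
  change maxIncSeq (P ∩ RV V2) ≤ maxIncSeq (P ∩ RV V1)
  have hXP := (Finset.mem_inter.1 hX).1
  obtain ⟨hYP, hYV2⟩ := Finset.mem_inter.1 hY
  have hlower : ∀ m ∈ P ∩ RV V2, m ≠ X → m ∈ P ∩ RV V1 := fun m =>
    mem_inter_RV_of_below hP.1 hbelow hXP hXtop
  obtain ⟨f, hfM, hf⟩ := exists_incSeq_maxIncSeq (P ∩ RV V2)
  by_cases hfX : ∃ i₀, f i₀ = X
  · obtain ⟨i₀, rfl⟩ := hfX
    have hlast : ∀ j, j ≤ i₀ := fun j => le_of_not_gt fun h => by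
      have := (hf i₀ j h).2
      have := (mem_RV.1 (Finset.mem_inter.1 (hfM j)).2).2
      omega
    have hsq : (Y.1, (f i₀).2) ∈ F.squares :=
      h2.RV_subset (mem_RV.2 ⟨(mem_RV.1 hYV2).1, by omega⟩)
    have hYabove : ∀ j < i₀, (f j).1 < Y.1 ∧ (f j).2 < Y.2 := fun j hj =>
      ⟨(hf j i₀ hj).1.trans hXY, hPavoid.snd_lt_snd hP.1 (Finset.mem_inter.1 (hfM j)).1 hXP hYP
        (hf j i₀ hj).1 hXY (hf j i₀ hj).2 hsq⟩
    refine le_maxIncSeq (fun j => ?_) (hf.update_last hlast hYabove)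
    rcases eq_or_ne j i₀ with rfl | hj
    · rw [Function.update_self]
      exact hlower Y hY fun h => hXY.ne' (congrArg Prod.fst h)
    · rw [Function.update_of_ne hj]
      exact hlower (f j) (hfM j) (hf.injective.ne hj)
  · push Not at hfX
    exact le_maxIncSeq (fun j => hlower _ (hfM j) (hfX j)) hf

/-- Lemma 5.  Suppose `P` is a 231-avoiding full rook
placement on a Ferrers board `F` and `V1`, `V2` are vertices of `F` with `V1`
directly below `V2`.  Suppose `P` has a marker `X` in the top row of `R(V2)` and
another marker `Y` in `R(V2)` to the right of `X`.  Then `S(P,V1) = S(P,V2)`. -/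
theorem SPV_eq_of_marker_in_top_row {n : ℕ} (F : FerrersBoard n)
    (P : Finset Square) (hP : IsFullPlacement F P) (hPavoid : AvoidsOn F P perm231)
    (V1 V2 : ℕ × ℕ) (h1 : F.IsVertex V1) (h2 : F.IsVertex V2)
    (hbelow : Below V1 V2)
    (X Y : Square) (hX : X ∈ P ∩ RV V2) (hXtop : X.2 + 1 = V2.2)
    (hY : Y ∈ P ∩ RV V2) (hXY : X.1 < Y.1) :
    SPV P V1 = SPV P V2 :=
  SPV_eq_of_marker_in_top_row_general F P hP hPavoid V1 V2 h2 hbelow X Y hX hXtop hY hXY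
end

section
/- Suppose P is a rook placement on a Ferrers board F whose restriction to a rectangle R(V) contains no 231-pattern, X is a marker of P in the top row of R(V), and there exists a marker of P in R(V) to the right of X. Then every marker of P in R(V) lying to the right of X is in a higher row than every marker of P in R(V) lying to the left of X. -/
/-- Suppose `P` is a rook placement on a Ferrers board `F`
whose restriction to a rectangle `R(V)` contains no 231-pattern, `X` is a marker
of `P` in the top row of `R(V)`, and some marker of `P` in `R(V)` lies to the
right of `X`.  Then every marker of `P` in `R(V)` to the right of `X` is in a
higher row than every marker of `P` in `R(V)` to the left of `X`. -/
theorem right_markers_above_left_markers {n : ℕ} (F : FerrersBoard n)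
    (P : Finset Square) (hP : IsRookPlacement F P) (V : ℕ × ℕ)
    (hno : ¬ ContainsPattern (P ∩ RV V) perm231)
    (X : Square) (hX : X ∈ P ∩ RV V) (hXtop : X.2 + 1 = V.2)
    (hexists : ∃ Y ∈ P ∩ RV V, X.1 < Y.1) :
    ∀ Z ∈ P ∩ RV V, X.1 < Z.1 → ∀ W ∈ P ∩ RV V, W.1 < X.1 → W.2 < Z.2 := by
  rintro Z hZ hXZ W hW hWX
  obtain ⟨hPF, hcol, hrow⟩ := hP
  have hWP := (Finset.mem_inter.mp hW).1
  have hZP := (Finset.mem_inter.mp hZ).1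
  have hXP := (Finset.mem_inter.mp hX).1
  have hWV := (Finset.mem_inter.mp hW).2
  have hZV := (Finset.mem_inter.mp hZ).2
  simp only [RV, Finset.mem_product, Finset.mem_range] at hWV hZV
  by_contra h
  push_neg at h
  have hZW : Z.2 < W.2 := lt_of_le_of_ne h fun e => by
    have := hrow Z hZP W hWP e
    rw [this] at hXZ; omega
  have hWX2 : W.2 < X.2 := by
    have hle : W.2 ≤ X.2 := by omega
    rcases lt_or_eq_of_le hle with h' | h'
    · exact h'
    · have := hrow W hWP X hXP h'
      rw [this] at hWX; omega
  apply hno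
  have hZX : Z.2 < X.2 := hZW.trans hWX2
  have hWZ1 : W.1 < Z.1 := hWX.trans hXZ
  refine ⟨fun i => if i.val = 0 then W else if i.val = 1 then X else Z, ?_, ?_, ?_⟩
  · intro i; fin_cases i
    · exact hW
    · exact hX
    · exact hZ
  · intro i j hij; fin_cases i <;> fin_cases j <;>
      first
        | exact absurd hij (by decide)
        | exact hWX
        | exact hWZ1
        | exact hXZ
  · intro i j; fin_cases i <;> fin_cases j <;>
      first
        | exact iff_of_true hWX2 (by decide)
        | exact iff_of_true hZW (by decide)
        | exact iff_of_true hZX (by decide)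
        | exact iff_of_false (lt_irrefl _) (by decide)
        | exact iff_of_false (not_lt.mpr hWX2.le) (by decide)
        | exact iff_of_false (not_lt.mpr hZW.le) (by decide)
        | exact iff_of_false (not_lt.mpr hZX.le) (by decide)
end

section
/- Let P be a full rook placement on a Ferrers board F and let S = S(P,F). Then S satisfies the 0-conditions: the first and last values of S are 0, and there do not exist two consecutive border vertices V1, V2 with S(V1) = 0 = S(V2). -/
section Aux

/-- A downward-closed finset of naturals has `r ∈ s ↔ r < s.card`. -/
lemma mem_iff_lt_card_of_downclosed (s : Finset ℕ)
    (hs : ∀ r ∈ s, ∀ r' ≤ r, r' ∈ s) (r : ℕ) : r ∈ s ↔ r < s.card := by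
  constructor
  · intro hr
    have hsub : Finset.range (r + 1) ⊆ s := by
      intro x hx
      exact hs r hr x (Nat.lt_succ_iff.mp (Finset.mem_range.mp hx))
    have := Finset.card_le_card hsub
    simpa using this
  · intro hr
    by_contra hmem
    have hsub : s ⊆ Finset.range r := by
      intro x hx
      refine Finset.mem_range.mpr ?_
      by_contra hxr
      exact hmem (hs x hx r (Nat.le_of_not_lt hxr))
    have := Finset.card_le_card hsub
    simp only [Finset.card_range] at this
    omega

lemma mem_iff_lt_colHeight {n : ℕ} (F : FerrersBoard n) (c r : ℕ) :
    (c, r) ∈ F.squares ↔ r < F.colHeight c := by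
  classical
  set t := (F.squares.filter fun s => s.1 = c)
  have himg : (t.image Prod.snd).card = t.card := by
    apply Finset.card_image_of_injOn
    intro x hx y hy hxy
    simp only [t, Finset.mem_coe, Finset.mem_filter] at hx hy
    exact Prod.ext (hx.2.trans hy.2.symm) hxy
  have hdc : ∀ r ∈ t.image Prod.snd, ∀ r' ≤ r, r' ∈ t.image Prod.snd := by
    intro a ha a' ha'
    simp only [t, Finset.mem_image, Finset.mem_filter] at ha ⊢
    obtain ⟨⟨x1, x2⟩, ⟨hx, hx1⟩, hx2⟩ := ha
    simp only at hx1 hx2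
    subst hx1; subst hx2
    exact ⟨(x1, a'), ⟨F.closed _ hx (x1, a') le_rfl ha', rfl⟩, rfl⟩
  have key := mem_iff_lt_card_of_downclosed _ hdc r
  rw [himg] at key
  rw [show F.colHeight c = t.card from rfl, ← key]
  simp only [t, Finset.mem_image, Finset.mem_filter]
  constructor
  · intro h; exact ⟨(c, r), ⟨h, rfl⟩, rfl⟩
  · rintro ⟨⟨x1, x2⟩, ⟨hx, hx1⟩, hx2⟩
    simp only at hx1 hx2; subst hx1; subst hx2; exact hx

lemma mem_iff_lt_rowWidth {n : ℕ} (F : FerrersBoard n) (c r : ℕ) :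
    (c, r) ∈ F.squares ↔ c < F.rowWidth r := by
  classical
  set t := (F.squares.filter fun s => s.2 = r)
  have himg : (t.image Prod.fst).card = t.card := by
    apply Finset.card_image_of_injOn
    intro x hx y hy hxy
    simp only [t, Finset.mem_coe, Finset.mem_filter] at hx hy
    exact Prod.ext hxy (hx.2.trans hy.2.symm)
  have hdc : ∀ a ∈ t.image Prod.fst, ∀ a' ≤ a, a' ∈ t.image Prod.fst := by
    intro a ha a' ha'
    simp only [t, Finset.mem_image, Finset.mem_filter] at ha ⊢
    obtain ⟨⟨x1, x2⟩, ⟨hx, hx2⟩, hx1⟩ := ha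
    simp only at hx1 hx2
    subst hx1; subst hx2
    exact ⟨(a', x2), ⟨F.closed _ hx (a', x2) ha' le_rfl, rfl⟩, rfl⟩
  have key := mem_iff_lt_card_of_downclosed _ hdc c
  rw [himg] at key
  rw [show F.rowWidth r = t.card from rfl, ← key]
  simp only [t, Finset.mem_image, Finset.mem_filter]
  constructor
  · intro h; exact ⟨(c, r), ⟨h, rfl⟩, rfl⟩
  · rintro ⟨⟨x1, x2⟩, ⟨hx, hx2⟩, hx1⟩
    simp only at hx1 hx2; subst hx1; subst hx2; exact hx

lemma maxIncSeq_bddAbove (M : Finset Square) :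
    BddAbove {k : ℕ | ∃ f : Fin k → Square, (∀ i, f i ∈ M) ∧
      ∀ i j : Fin k, i < j → (f i).1 < (f j).1 ∧ (f i).2 < (f j).2} := by
  refine ⟨M.card, ?_⟩
  rintro k ⟨f, hfM, hmono⟩
  have hinj : Function.Injective f := by
    intro i j hij
    by_contra hne
    rcases lt_or_gt_of_ne (fun h : i = j => hne h) with h | h
    · exact absurd (hij ▸ (hmono i j h).1) (lt_irrefl _)
    · exact absurd (hij ▸ (hmono j i h).1) (by simp [hij])
  calc k = (Finset.univ : Finset (Fin k)).card := by simp
    _ ≤ M.card := Finset.card_le_card_of_injOn f (fun i _ => hfM i)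
        (fun i _ j _ h => hinj h)

lemma maxIncSeq_empty_of_zero (M : Finset Square) (h : maxIncSeq M = 0) :
    M = ∅ := by
  by_contra hne
  obtain ⟨m, hm⟩ := Finset.nonempty_iff_ne_empty.mpr hne
  have h1 : 1 ∈ {k : ℕ | ∃ f : Fin k → Square, (∀ i, f i ∈ M) ∧
      ∀ i j : Fin k, i < j → (f i).1 < (f j).1 ∧ (f i).2 < (f j).2} := by
    refine ⟨fun _ => m, fun _ => hm, ?_⟩
    intro i j hij
    exact absurd hij (by omega)
  have := le_csSup (maxIncSeq_bddAbove M) h1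
  rw [show sSup _ = maxIncSeq M from rfl, h] at this
  omega

lemma maxIncSeq_empty : maxIncSeq (∅ : Finset Square) = 0 := by
  have hsub : {k : ℕ | ∃ f : Fin k → Square, (∀ i, f i ∈ (∅ : Finset Square)) ∧
      ∀ i j : Fin k, i < j → (f i).1 < (f j).1 ∧ (f i).2 < (f j).2} = {0} := by
    ext k
    simp only [Set.mem_setOf_eq, Set.mem_singleton_iff]
    constructor
    · rintro ⟨f, hf, -⟩
      by_contra hk
      exact absurd (hf ⟨0, Nat.pos_of_ne_zero hk⟩) (by simp)
    · rintro rfl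
      exact ⟨Fin.elim0, fun i => i.elim0, fun i => i.elim0⟩
  rw [maxIncSeq, hsub, csSup_singleton]

end Aux

/-- If `P` is a full rook placement on a Ferrers board `F`
and `S = S(P,F)`, then `S` satisfies the 0-conditions: its first value (at the
top-left corner `(0, height F)`) and its last value (at the bottom-right corner
`(width F, 0)`) are `0`, and no two consecutive vertices of the right/up border
both have value `0`. -/
theorem zero_conditions {n : ℕ} (F : FerrersBoard n) (P : Finset Square)
    (hP : IsFullPlacement F P) :
    SPV P (0, F.height) = 0 ∧ SPV P (F.width, 0) = 0 ∧
    ∀ V1 V2 : ℕ × ℕ, F.IsBorderVertex V1 → F.IsBorderVertex V2 →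
      (LeftOf V1 V2 ∨ Below V1 V2) → ¬(SPV P V1 = 0 ∧ SPV P V2 = 0) := by
  obtain ⟨⟨hPF, hcol, hrow⟩, hfull⟩ := hP
  refine ⟨?_, ?_, ?_⟩
  · have : P ∩ RV (0, F.height) = ∅ := by
      simp [RV]
    rw [SPV, this, maxIncSeq_empty]
  · have : P ∩ RV (F.width, 0) = ∅ := by
      simp [RV]
    rw [SPV, this, maxIncSeq_empty]
  · rintro ⟨a1, b1⟩ ⟨a2, b2⟩ hV1 hV2 hadj ⟨hS1, hS2⟩
    have hE1 := maxIncSeq_empty_of_zero _ hS1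
    have hE2 := maxIncSeq_empty_of_zero _ hS2
    obtain ⟨hw1, hcl1, hcu1⟩ := hV1
    obtain ⟨hw2, hcl2, hcu2⟩ := hV2
    simp only at hw1 hcl1 hcu1 hw2 hcl2 hcu2
    rcases hadj with ⟨ha, hb⟩ | ⟨ha, hb⟩
    · -- LeftOf: a2 = a1 + 1, b2 = b1
      simp only at ha hb
      subst ha hb
      -- b2 = colHeight a1 and column a1 is nonempty
      have hba : b2 ≤ F.colHeight a1 := by
        simpa using hcu2
      have hcol_pos : (a1, 0) ∈ F.squares := by
        rw [mem_iff_lt_rowWidth]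
        exact lt_of_lt_of_le (Nat.lt_succ_self a1) hw2
      have hpos : 0 < F.colHeight a1 := by
        rw [← mem_iff_lt_colHeight]; exact hcol_pos
      obtain ⟨r, hr⟩ := (hfull _ hcol_pos).1
      have hrF : (a1, r) ∈ F.squares := hPF hr
      have hrb : r < F.colHeight a1 := (mem_iff_lt_colHeight F a1 r).mp hrF
      have : (a1, r) ∈ P ∩ RV (a1 + 1, b2) := by
        refine Finset.mem_inter.mpr ⟨hr, ?_⟩
        simp only [RV, Finset.mem_product, Finset.mem_range]
        exact ⟨Nat.lt_succ_self a1, by omega⟩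
      rw [hE2] at this
      simp at this
    · -- Below: a2 = a1, b2 = b1 + 1
      simp only at ha hb
      subst ha hb
      -- a2 ≥ 1, row b1 is nonempty with all squares having column < a2
      have ha2 : 1 ≤ a2 := by
        by_contra h
        have : a2 = 0 := by omega
        subst this
        simp only [Nat.zero_sub] at hcu2
        omega
      have hrow_ne : (a2 - 1, b1) ∈ F.squares := by
        rw [mem_iff_lt_colHeight]
        omega
      obtain ⟨c, hc⟩ := (hfull _ hrow_ne).2
      have hcF : (c, b1) ∈ F.squares := hPF hc
      have hca : c < a2 := by
        by_contra h
        have : (a2, b1) ∈ F.squares :=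
          F.closed _ hcF (a2, b1) (Nat.le_of_not_lt h) le_rfl
        rw [mem_iff_lt_colHeight] at this
        omega
      have : (c, b1) ∈ P ∩ RV (a2, b1 + 1) := by
        refine Finset.mem_inter.mpr ⟨hc, ?_⟩
        simp only [RV, Finset.mem_product, Finset.mem_range]
        exact ⟨hca, Nat.lt_succ_self b1⟩
      rw [hE2] at this
      simp at this
end
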